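/- If Γ ⊆ Ω(G) is nonempty and |⋃Γ| + |⋂Γ| = 2α(G), then the induced subgraph G[⋃Γ] is a König-Egerváry graph, i.e., α(G[⋃Γ]) + μ(G[⋃Γ]) = |⋃Γ|. -/

import Mathlib

open Set

variable {V : Type*}

/-- `S` is an independent set of `G`. -/
def IndepSet (G : SimpleGraph V) (S : Set V) : Prop :=
  ∀ x ∈ S, ∀ y ∈ S, ¬ G.Adj x y

/-- The independence number `α(G)`. -/
noncomputable def alpha (G : SimpleGraph V) : ℕ :=
  sSup {n | ∃ S : Set V, IndepSet G S ∧ S.ncard = n}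

/-- `S` is a maximum independent set of `G`. -/
def MaxIndep (G : SimpleGraph V) (S : Set V) : Prop :=
  IndepSet G S ∧ S.ncard = alpha G

/-- `Ω(G)`, the family of all maximum independent sets. -/
def Omega (G : SimpleGraph V) : Set (Set V) := {S | MaxIndep G S}

/-- `core(G)`, the intersection of all maximum independent sets. -/
def core (G : SimpleGraph V) : Set V := ⋂₀ Omega G

/-- `corona(G)`, the union of all maximum independent sets. -/
def corona (G : SimpleGraph V) : Set V := ⋃₀ Omega G

/-- The matching number `μ(G)`. -/
noncomputable def matchNum (G : SimpleGraph V) : ℕ :=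
  sSup {n | ∃ M : G.Subgraph, M.IsMatching ∧ M.edgeSet.ncard = n}

/-- A matching from `X` into `Y`: an injection `f` on `X` into `Y` such that each `x ∈ X`
is adjacent to `f x` and the edges `{x, f x}` are pairwise disjoint. -/
def MatchingFrom (G : SimpleGraph V) (X Y : Set V) : Prop :=
  ∃ f : V → V, Set.InjOn f X ∧ (∀ x ∈ X, f x ∈ Y ∧ G.Adj x (f x)) ∧
    ∀ x ∈ X, ∀ y ∈ X, x ≠ y → f x ≠ y

/-!
Let `U = ⋃₀ Γ`, `C = ⋂₀ Γ` and `S ∈ Γ`. Since `S ⊆ U`, `α(G[U]) = α(G)`, and in any graph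
`μ + α ≤ |V|` because every matching edge has an endpoint outside a fixed maximum independent set.
Conversely, an exchange argument with Hall's theorem gives a matching from `S \ C` into `U \ S`,
so `μ(G[U]) ≥ α(G) - |C|`, which equals `|U| - α(G)` by the hypothesis.
-/

open SimpleGraph

section Alpha

variable [Finite V] {G : SimpleGraph V}

lemma IndepSet.ncard_le_alpha {S : Set V} (hS : IndepSet G S) : S.ncard ≤ alpha G :=
  le_csSup ⟨Nat.card V, by rintro n ⟨T, -, rfl⟩; exact T.ncard_le_card⟩ ⟨S, hS, rfl⟩

lemma exists_indepSet_ncard_eq_alpha (G : SimpleGraph V) :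
    ∃ T : Set V, IndepSet G T ∧ T.ncard = alpha G :=
  Nat.sSup_mem (s := {n | ∃ S : Set V, IndepSet G S ∧ S.ncard = n}) ⟨0, ∅, by simp [IndepSet]⟩
    ⟨Nat.card V, by rintro n ⟨T, -, rfl⟩; exact T.ncard_le_card⟩

lemma alpha_induce_le (U : Set V) : alpha (G.induce U) ≤ alpha G := by
  obtain ⟨T, hT, hTcard⟩ := exists_indepSet_ncard_eq_alpha (G.induce U)
  have hT' : IndepSet G (Subtype.val '' T) := by
    rintro _ ⟨x, hx, rfl⟩ _ ⟨y, hy, rfl⟩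
    exact hT x hx y hy
  rw [← hTcard, ← Set.ncard_image_of_injective T Subtype.val_injective]
  exact hT'.ncard_le_alpha

lemma MaxIndep.alpha_le_alpha_induce {S U : Set V} (hS : MaxIndep G S) (hSU : S ⊆ U) :
    alpha G ≤ alpha (G.induce U) := by
  have hS' : IndepSet (G.induce U) (Subtype.val ⁻¹' S) := fun x hx y hy ↦ hS.1 x hx y hy
  calc alpha G = S.ncard := hS.2.symm
    _ = (Subtype.val ⁻¹' S : Set U).ncard := by
      rw [← Set.ncard_image_of_injective _ Subtype.val_injective, Subtype.image_preimage_coe,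
        Set.inter_eq_self_of_subset_right hSU]
    _ ≤ alpha (G.induce U) := hS'.ncard_le_alpha

lemma MaxIndep.alpha_induce_eq {S U : Set V} (hS : MaxIndep G S) (hSU : S ⊆ U) :
    alpha (G.induce U) = alpha G :=
  (alpha_induce_le U).antisymm (hS.alpha_le_alpha_induce hSU)

end Alpha

section MatchNum

variable [Finite V] {G : SimpleGraph V}

lemma SimpleGraph.Subgraph.IsMatching.ncard_edgeSet_le_matchNum {M : G.Subgraph}
    (hM : M.IsMatching) : M.edgeSet.ncard ≤ matchNum G :=
  le_csSup ⟨Nat.card (Sym2 V), by rintro n ⟨M, -, rfl⟩; exact M.edgeSet.ncard_le_card⟩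
    ⟨M, hM, rfl⟩

/-- Every edge of `M` has an endpoint outside the independent set `T`, and that endpoint
determines the edge. -/
lemma SimpleGraph.Subgraph.IsMatching.ncard_edgeSet_le_ncard_compl {M : G.Subgraph}
    (hM : M.IsMatching) {T : Set V} (hT : IndepSet G T) : M.edgeSet.ncard ≤ Tᶜ.ncard := by
  let edgeAt : M.verts → Sym2 V := fun v ↦ hM.toEdge v
  have hcover : M.edgeSet ⊆ edgeAt '' {v | v.1 ∉ T} := by
    rintro ⟨a, b⟩ hab
    have hab : M.Adj a b := hab
    by_cases ha : a ∈ T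
    · have hb : b ∉ T := fun hb ↦ hT a ha b hb (M.adj_sub hab)
      refine ⟨⟨b, hab.snd_mem⟩, hb, ?_⟩
      simp [edgeAt, hM.toEdge_eq_of_adj hab.symm, Sym2.eq_swap]
    · exact ⟨⟨a, hab.fst_mem⟩, ha, by simp [edgeAt, hM.toEdge_eq_of_adj hab]⟩
  calc M.edgeSet.ncard ≤ (edgeAt '' {v | v.1 ∉ T}).ncard := Set.ncard_le_ncard hcover
    _ ≤ {v : M.verts | v.1 ∉ T}.ncard := Set.ncard_image_le
    _ = (Subtype.val '' {v : M.verts | v.1 ∉ T}).ncard :=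
      (Set.ncard_image_of_injective _ Subtype.val_injective).symm
    _ ≤ Tᶜ.ncard := Set.ncard_le_ncard (by rintro _ ⟨v, hv, rfl⟩; exact hv)

lemma matchNum_add_alpha_le_card : matchNum G + alpha G ≤ Nat.card V := by
  obtain ⟨T, hT, hTcard⟩ := exists_indepSet_ncard_eq_alpha G
  have hmatch : matchNum G ≤ Tᶜ.ncard :=
    csSup_le ⟨0, ⊥, fun _ hv ↦ hv.elim, by simp⟩ fun n ⟨M, hM, hn⟩ ↦
      hn ▸ hM.ncard_edgeSet_le_ncard_compl hT
  have hsplit : T.ncard + Tᶜ.ncard = Nat.card V := by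
    rw [← Set.ncard_union_eq disjoint_compl_right, Set.union_compl_self, Set.ncard_univ]
  omega

end MatchNum

section MatchingFrom

variable [Finite V] {G : SimpleGraph V}

lemma MatchingFrom.ncard_le_matchNum_induce {X Y U : Set V} (hXY : MatchingFrom G X Y)
    (hXU : X ⊆ U) (hYU : Y ⊆ U) : X.ncard ≤ matchNum (G.induce U) := by
  obtain ⟨f, hinj, hmaps, hne⟩ := hXY
  let src (x : X) : U := ⟨x, hXU x.2⟩
  let tgt (x : X) : U := ⟨f x, hYU (hmaps x x.2).1⟩
  have hadj (x : X) : (G.induce U).Adj (src x) (tgt x) := (hmaps x x.2).2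
  let edge (x : X) : (G.induce U).Subgraph := (G.induce U).subgraphOfAdj (hadj x)
  have hdisj : Pairwise fun x y ↦ Disjoint (edge x).support (edge y).support := by
    intro x y hxy
    have hxy' : (x : V) ≠ y := Subtype.coe_ne_coe.mpr hxy
    simp only [edge, support_subgraphOfAdj, Set.disjoint_insert_left,
      Set.disjoint_insert_right, Set.disjoint_singleton, Set.mem_insert_iff,
      Set.mem_singleton_iff, src, tgt, ne_eq, Subtype.mk.injEq, not_or]
    exact ⟨⟨hxy'.symm, (hne x x.2 y y.2 hxy').symm⟩, (hne y y.2 x x.2 hxy'.symm).symm,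
      fun h ↦ hxy' (hinj x.2 y.2 h)⟩
  have hedges : (⨆ x, edge x).edgeSet = Set.range fun x ↦ s(src x, tgt x) := by
    simp [edge, Subgraph.edgeSet_iSup, edgeSet_subgraphOfAdj,
      Set.iUnion_singleton_eq_range]
  have hedge_inj : Function.Injective fun x ↦ s(src x, tgt x) := by
    intro x y hxy
    simp only [Sym2.eq, Sym2.rel_iff', Prod.mk.injEq, Prod.swap_prod_mk, src, tgt,
      Subtype.mk.injEq] at hxy
    rcases hxy with ⟨hxy, -⟩ | ⟨hxy, -⟩
    · exact Subtype.ext hxy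
    · by_contra h
      exact hne y y.2 x x.2 (fun h' ↦ h (Subtype.ext h').symm) hxy.symm
  calc X.ncard = Nat.card X := (Nat.card_coe_set_eq X).symm
    _ = (⨆ x, edge x).edgeSet.ncard := by
      rw [hedges, Set.ncard_range_of_injective hedge_inj]
    _ ≤ matchNum (G.induce U) :=
      (Subgraph.IsMatching.iSup (fun _ ↦ .subgraphOfAdj _) hdisj).ncard_edgeSet_le_matchNum

end MatchingFrom

section Hall

lemma not_adj_of_mem_sUnion_of_mem_sInter {G : SimpleGraph V} {Γ : Set (Set V)}
    (hΓ : Γ ⊆ Omega G) {u v : V} (hu : u ∈ ⋃₀ Γ) (hv : v ∈ ⋂₀ Γ) : ¬ G.Adj u v := by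
  obtain ⟨T, hT, huT⟩ := hu
  exact (hΓ hT).1 u huT v (hv T hT)

variable [Finite V] {G : SimpleGraph V}

/-- Exchanging `W` for its neighbours in `S` keeps `S` independent, so maximality of `S` forces
`|W| ≤ |N(W) ∩ S|`. -/
lemma MaxIndep.ncard_le_ncard_neighbors_inter {S W : Set V} (hS : MaxIndep G S)
    (hW : IndepSet G W) (hWS : Disjoint W S) :
    W.ncard ≤ ((⋃ w ∈ W, G.neighborSet w) ∩ S).ncard := by
  set N := ⋃ w ∈ W, G.neighborSet w
  have hmemN {w v : V} (hw : w ∈ W) (hwv : G.Adj w v) : v ∈ N := Set.mem_biUnion hw hwv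
  have hexchange : IndepSet G ((S \ N) ∪ W) := by
    rintro x (⟨hxS, hxN⟩ | hxW) y (⟨hyS, hyN⟩ | hyW) hxy
    · exact hS.1 x hxS y hyS hxy
    · exact hxN (hmemN hyW hxy.symm)
    · exact hyN (hmemN hxW hxy)
    · exact hW x hxW y hyW hxy
  have hunion : ((S \ N) ∪ W).ncard = (S \ N).ncard + W.ncard :=
    Set.ncard_union_eq (Set.disjoint_of_subset_left Set.sdiff_subset hWS.symm)
  have hsplit : (N ∩ S).ncard + (S \ N).ncard = S.ncard := by
    rw [Set.inter_comm]; exact Set.ncard_inter_add_ncard_sdiff_eq_ncard S N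
  have := hexchange.ncard_le_alpha
  have := hS.2
  omega

/-- Induction on `Γ = insert S Γ₀`, splitting `W` along `⋂₀ Γ₀`: the part outside is handled by
induction, the part inside (which misses `S`) by the exchange lemma for `S`, and the two
neighbourhoods counted are disjoint since `⋂₀ Γ₀` has no neighbours in `⋃₀ Γ₀`. -/
lemma ncard_le_ncard_neighbors_inter_sUnion {Γ : Set (Set V)} (hΓ : Γ ⊆ Omega G) {W : Set V}
    (hW : IndepSet G W) (hWΓ : Disjoint W (⋂₀ Γ)) :
    W.ncard ≤ ((⋃ w ∈ W, G.neighborSet w) ∩ ⋃₀ Γ).ncard := by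
  induction Γ, Γ.toFinite using Set.Finite.induction_on generalizing W with
  | empty => simp_all
  | @insert S Γ₀ _ _ ih =>
    have hS : MaxIndep G S := hΓ (Set.mem_insert S Γ₀)
    have hΓ₀ : Γ₀ ⊆ Omega G := (Set.subset_insert S Γ₀).trans hΓ
    set A := ⋂₀ Γ₀
    have hout := ih hΓ₀ (W := W \ A) (fun x hx y hy ↦ hW x hx.1 y hy.1) Set.disjoint_sdiff_left
    have hin := hS.ncard_le_ncard_neighbors_inter (W := W ∩ A)
      (fun x hx y hy ↦ hW x hx.1 y hy.1) <| by
        rw [Set.sInter_insert] at hWΓ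
        exact Set.disjoint_left.mpr fun w hw hwS ↦ hWΓ.notMem_of_mem_left hw.1 ⟨hwS, hw.2⟩
    have hdisj : Disjoint ((⋃ w ∈ W \ A, G.neighborSet w) ∩ ⋃₀ Γ₀)
        ((⋃ w ∈ W ∩ A, G.neighborSet w) ∩ S) := by
      refine Set.disjoint_left.mpr fun v hv ⟨hvN, _⟩ ↦ ?_
      obtain ⟨w, hw, hwv⟩ := Set.mem_iUnion₂.mp hvN
      exact not_adj_of_mem_sUnion_of_mem_sInter hΓ₀ hv.2 hw.2 (G.adj_symm hwv)
    have hsub : ((⋃ w ∈ W \ A, G.neighborSet w) ∩ ⋃₀ Γ₀) ∪ ((⋃ w ∈ W ∩ A, G.neighborSet w) ∩ S) ⊆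
        (⋃ w ∈ W, G.neighborSet w) ∩ ⋃₀ insert S Γ₀ := by
      rw [Set.sUnion_insert]
      exact Set.union_subset
        (Set.inter_subset_inter (Set.biUnion_subset_biUnion_left Set.sdiff_subset)
          Set.subset_union_right)
        (Set.inter_subset_inter (Set.biUnion_subset_biUnion_left Set.inter_subset_left)
          Set.subset_union_left)
    have hsplit := Set.ncard_inter_add_ncard_sdiff_eq_ncard W A
    have := Set.ncard_union_eq hdisj
    have := Set.ncard_le_ncard hsub
    omega

lemma exists_matchingFrom_sdiff_sInter {Γ : Set (Set V)} (hΓ : Γ ⊆ Omega G) {S : Set V}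
    (hS : S ∈ Γ) : MatchingFrom G (S \ ⋂₀ Γ) (⋃₀ Γ \ S) := by
  classical
  have := Fintype.ofFinite V
  have hSind : IndepSet G S := (hΓ hS).1
  obtain ⟨f, hf_inj, hf⟩ := (Fintype.all_card_le_filter_rel_iff_exists_injective
    (fun (x : ↥(S \ ⋂₀ Γ)) v ↦ G.Adj x v ∧ v ∈ ⋃₀ Γ)).mp fun A ↦ by
      set W : Set V := Subtype.val '' (A : Set ↥(S \ ⋂₀ Γ))
      have hWS : W ⊆ S \ ⋂₀ Γ := by rintro _ ⟨x, -, rfl⟩; exact x.2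
      have hW := ncard_le_ncard_neighbors_inter_sUnion hΓ (W := W)
        (fun x hx y hy ↦ hSind x (hWS hx).1 y (hWS hy).1)
        (Set.disjoint_left.mpr fun w hw ↦ (hWS hw).2)
      rw [Set.ncard_image_of_injective _ Subtype.val_injective, Set.ncard_coe_finset] at hW
      convert hW using 1
      rw [← Set.ncard_coe_finset]
      congr 1
      ext v
      simp only [W, Finset.coe_filter, Finset.mem_univ, true_and, Set.mem_ofPred_eq,
        Set.mem_inter_iff, Set.biUnion_image, Set.mem_iUnion, mem_neighborSet,
        Finset.mem_coe, exists_prop]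
      exact ⟨fun ⟨a, ha, hav, hv⟩ ↦ ⟨⟨a, ha, hav⟩, hv⟩, fun ⟨⟨a, ha, hav⟩, hv⟩ ↦ ⟨a, ha, hav, hv⟩⟩
  have hf_notMem (x : ↥(S \ ⋂₀ Γ)) : f x ∉ S := fun hfx ↦ hSind x x.2.1 (f x) hfx (hf x).1
  refine ⟨fun v ↦ if hv : v ∈ S \ ⋂₀ Γ then f ⟨v, hv⟩ else v, ?_, ?_, ?_⟩
  · intro x hx y hy hxy
    simp only [hx, hy, dite_true] at hxy
    exact congrArg Subtype.val (hf_inj hxy)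
  · intro x hx
    simpa [hx] using ⟨⟨(hf ⟨x, hx⟩).2, hf_notMem ⟨x, hx⟩⟩, (hf ⟨x, hx⟩).1⟩
  · intro x hx y hy _ hfxy
    simp only [hx, dite_true] at hfxy
    exact hf_notMem ⟨x, hx⟩ (hfxy ▸ hy.1)

end Hall

theorem stmt_16 [Fintype V] (G : SimpleGraph V)
    (Γ : Set (Set V)) (hΓ : Γ ⊆ Omega G) (hne : Γ.Nonempty)
    (h : (⋃₀ Γ).ncard + (⋂₀ Γ).ncard = 2 * alpha G) :
    alpha (G.induce (⋃₀ Γ)) + matchNum (G.induce (⋃₀ Γ)) = (⋃₀ Γ).ncard := by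
  obtain ⟨S, hSΓ⟩ := hne
  have hS : MaxIndep G S := hΓ hSΓ
  have hSU : S ⊆ ⋃₀ Γ := Set.subset_sUnion_of_mem hSΓ
  have hcore : (S \ ⋂₀ Γ).ncard + (⋂₀ Γ).ncard = alpha G := by
    rw [Set.ncard_sdiff_add_ncard_of_subset (Set.sInter_subset_of_mem hSΓ), hS.2]
  have hα : alpha (G.induce (⋃₀ Γ)) = alpha G := hS.alpha_induce_eq hSU
  have hlower : (S \ ⋂₀ Γ).ncard ≤ matchNum (G.induce (⋃₀ Γ)) :=
    (exists_matchingFrom_sdiff_sInter hΓ hSΓ).ncard_le_matchNum_induce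
      (Set.sdiff_subset.trans hSU) Set.sdiff_subset
  have hupper := matchNum_add_alpha_le_card (G := G.induce (⋃₀ Γ))
  rw [Nat.card_coe_set_eq] at hupper
  omega
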